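/- arXiv:2604.01677 — 2 statements merged into one kernel-verified Lean document; each statement's English description precedes it below -/
import Mathlib

section
/- The quotient ring Z[x1,x2,y1]/(2*x1 - 3*x2, x1 - x2 + 2*y1, x1*x2) is isomorphic as a ring to Z[t]/(24*t^2). -/
/-!
Modulo the two linear relations, `x₁ ≡ -6 y₁` and `x₂ ≡ -4 y₁`, so the quotient is generated
by `y₁` alone and the relation `x₁ x₂` becomes `24 y₁²`. Accordingly `x₁ ↦ 6t, x₂ ↦ 4t, y₁ ↦ -t`
and `t ↦ -y₁` are mutually inverse modulo the two ideals.
-/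

open MvPolynomial

def Ideal.quotientEquivOfInverseModulo {R S : Type*} [CommRing R] [CommRing S]
    {I : Ideal R} {J : Ideal S} (f : R →+* S) (g : S →+* R)
    (hf : I ≤ J.comap f) (hg : J ≤ I.comap g)
    (hgf : (Ideal.Quotient.mk I).comp (g.comp f) = Ideal.Quotient.mk I)
    (hfg : (Ideal.Quotient.mk J).comp (f.comp g) = Ideal.Quotient.mk J) :
    R ⧸ I ≃+* S ⧸ J :=
  RingEquiv.ofRingHom (Ideal.quotientMap J f hf) (Ideal.quotientMap I g hg)
    (Ideal.Quotient.ringHom_ext <| RingHom.ext fun y => by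
      simpa using RingHom.congr_fun hfg y)
    (Ideal.Quotient.ringHom_ext <| RingHom.ext fun x => by
      simpa using RingHom.congr_fun hgf x)

noncomputable section

namespace ChowRingP64

def relations : Ideal (MvPolynomial (Fin 3) ℤ) :=
  Ideal.span {2 * X 0 - 3 * X 1, X 0 - X 1 + 2 * X 2, X 0 * X 1}

def truncation : Ideal (Polynomial ℤ) :=
  Ideal.span {24 * Polynomial.X ^ 2}

def toPolynomial : MvPolynomial (Fin 3) ℤ →+* Polynomial ℤ :=
  eval₂Hom Polynomial.C ![6 * Polynomial.X, 4 * Polynomial.X, -Polynomial.X]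

def ofPolynomial : Polynomial ℤ →+* MvPolynomial (Fin 3) ℤ :=
  Polynomial.eval₂RingHom C (-X 2)

@[simp]
lemma toPolynomial_X_zero : toPolynomial (X 0) = 6 * Polynomial.X := by
  simp [toPolynomial]

@[simp]
lemma toPolynomial_X_one : toPolynomial (X 1) = 4 * Polynomial.X := by
  simp [toPolynomial]

@[simp]
lemma toPolynomial_X_two : toPolynomial (X 2) = -Polynomial.X := by
  simp [toPolynomial]

@[simp]
lemma ofPolynomial_X : ofPolynomial Polynomial.X = -X 2 := by
  simp [ofPolynomial]

lemma X_zero_add_mem_relations : X 0 + 6 * X 2 ∈ relations := by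
  have h : (X 0 + 6 * X 2 : MvPolynomial (Fin 3) ℤ) =
      3 * (X 0 - X 1 + 2 * X 2) - (2 * X 0 - 3 * X 1) := by ring
  rw [h]
  exact sub_mem (Ideal.mul_mem_left _ _ (Ideal.subset_span (by simp)))
    (Ideal.subset_span (by simp))

lemma X_one_add_mem_relations : X 1 + 4 * X 2 ∈ relations := by
  have h : (X 1 + 4 * X 2 : MvPolynomial (Fin 3) ℤ) =
      2 * (X 0 - X 1 + 2 * X 2) - (2 * X 0 - 3 * X 1) := by ring
  rw [h]
  exact sub_mem (Ideal.mul_mem_left _ _ (Ideal.subset_span (by simp)))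
    (Ideal.subset_span (by simp))

lemma twentyFour_mul_X_two_sq_mem_relations : 24 * X 2 ^ 2 ∈ relations := by
  have h : (24 * X 2 ^ 2 : MvPolynomial (Fin 3) ℤ) =
      X 0 * X 1 - (X 0 + 6 * X 2) * X 1 + 6 * X 2 * (X 1 + 4 * X 2) := by ring
  rw [h]
  exact add_mem (sub_mem (Ideal.subset_span (by simp))
    (Ideal.mul_mem_right _ _ X_zero_add_mem_relations))
    (Ideal.mul_mem_left _ _ X_one_add_mem_relations)

lemma relations_le_comap_toPolynomial : relations ≤ truncation.comap toPolynomial := by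
  rw [relations, Ideal.span_le]
  rintro p (rfl | rfl | rfl) <;>
    simp only [SetLike.mem_coe, Ideal.mem_comap, truncation, Ideal.mem_span_singleton',
      map_add, map_sub, map_mul, map_ofNat, toPolynomial_X_zero, toPolynomial_X_one,
      toPolynomial_X_two]
  exacts [⟨0, by ring⟩, ⟨0, by ring⟩, ⟨1, by ring⟩]

lemma truncation_le_comap_ofPolynomial : truncation ≤ relations.comap ofPolynomial := by
  rw [truncation, Ideal.span_le, Set.singleton_subset_iff, SetLike.mem_coe, Ideal.mem_comap]
  simpa [map_ofNat] using twentyFour_mul_X_two_sq_mem_relations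

lemma mk_ofPolynomial_comp_toPolynomial :
    (Ideal.Quotient.mk relations).comp (ofPolynomial.comp toPolynomial) =
      Ideal.Quotient.mk relations := by
  refine ringHom_ext' (RingHom.ext_int _ _) fun i => ?_
  rw [RingHom.comp_apply, RingHom.comp_apply, Ideal.Quotient.mk_eq_mk_iff_sub_mem]
  fin_cases i
  · simpa [map_ofNat, sub_eq_add_neg] using neg_mem X_zero_add_mem_relations
  · simpa [map_ofNat, sub_eq_add_neg] using neg_mem X_one_add_mem_relations
  · simp

lemma mk_toPolynomial_comp_ofPolynomial :
    (Ideal.Quotient.mk truncation).comp (toPolynomial.comp ofPolynomial) =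
      Ideal.Quotient.mk truncation :=
  Polynomial.ringHom_ext' (RingHom.ext_int _ _) (by simp)

end ChowRingP64

end

/-- The quotient ring ℤ[x₁,x₂,y₁]/(2x₁-3x₂, x₁-x₂+2y₁, x₁x₂) is isomorphic
to ℤ[t]/(24t²). -/
theorem stmt_0 :
    Nonempty
      ((MvPolynomial (Fin 3) ℤ ⧸
          Ideal.span ({2 * X 0 - 3 * X 1, X 0 - X 1 + 2 * X 2, X 0 * X 1} :
            Set (MvPolynomial (Fin 3) ℤ)))
        ≃+*
       (Polynomial ℤ ⧸
          Ideal.span ({24 * Polynomial.X ^ 2} : Set (Polynomial ℤ)))) :=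
  ⟨Ideal.quotientEquivOfInverseModulo ChowRingP64.toPolynomial ChowRingP64.ofPolynomial
    ChowRingP64.relations_le_comap_toPolynomial ChowRingP64.truncation_le_comap_ofPolynomial
    ChowRingP64.mk_ofPolynomial_comp_toPolynomial ChowRingP64.mk_toPolynomial_comp_ofPolynomial⟩
end

section
/- The quotient ring Z[x1,x2,x3]/(2*x1 + 4*x3, 3*x2 + 2*x3) is isomorphic as a ring to Z[s,t]/(2*t). -/
/-!
The relation matrix `[[2, 0, 4], [0, 3, 2]]` has Smith normal form `diag(1, 2)`, so an integral
linear change of variables `(x₁, x₂, x₃) ↔ (u, s, t)` turns the relations into `u`, `2t`. The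
substitution `x₁ ↦ t - 6s, x₂ ↦ -2s, x₃ ↦ 3s` sends the relations to `2t` and `0`, and
`s ↦ x₂ + x₃, t ↦ x₁ + 6x₂ + 6x₃` sends `2t` to `(2x₁ + 4x₃) + 4(3x₂ + 2x₃)`; the two
substitutions are mutually inverse modulo the relations. In the code `xᵢ = X (i - 1)`,
`s = X 0` and `t = X 1`.
-/

open MvPolynomial

namespace Ideal

variable {R S : Type*} [CommRing R] [CommRing S] {I : Ideal R} {J : Ideal S}

def quotientEquivOfInverseModulo_s2 (f : R →+* S) (g : S →+* R) (hf : I ≤ J.comap f)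
    (hg : J ≤ I.comap g) (hgf : ∀ x, g (f x) - x ∈ I) (hfg : ∀ y, f (g y) - y ∈ J) :
    R ⧸ I ≃+* S ⧸ J :=
  RingEquiv.ofRingHom (quotientMap J f hf) (quotientMap I g hg)
    (Quotient.ringHom_ext <| RingHom.ext fun y => by simpa using Quotient.eq.mpr (hfg y))
    (Quotient.ringHom_ext <| RingHom.ext fun x => by simpa using Quotient.eq.mpr (hgf x))

end Ideal

theorem MvPolynomial.sub_mem_of_forall_X_sub_mem {R σ : Type*} [CommRing R]
    {I : Ideal (MvPolynomial σ R)} (e : MvPolynomial σ R →ₐ[R] MvPolynomial σ R)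
    (h : ∀ i, e (X i) - X i ∈ I) (p : MvPolynomial σ R) : e p - p ∈ I := by
  have he : (Ideal.Quotient.mkₐ R I).comp e = Ideal.Quotient.mkₐ R I :=
    algHom_ext fun i => Ideal.Quotient.eq.mpr (h i)
  exact Ideal.Quotient.eq.mp (AlgHom.congr_fun he p)

noncomputable section

abbrev relX : Ideal (MvPolynomial (Fin 3) ℤ) := Ideal.span {2 * X 0 + 4 * X 2, 3 * X 1 + 2 * X 2}

abbrev relST : Ideal (MvPolynomial (Fin 2) ℤ) := Ideal.span {2 * X 1}

def toST : MvPolynomial (Fin 3) ℤ →ₐ[ℤ] MvPolynomial (Fin 2) ℤ :=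
  aeval ![X 1 - 6 * X 0, -2 * X 0, 3 * X 0]

def ofST : MvPolynomial (Fin 2) ℤ →ₐ[ℤ] MvPolynomial (Fin 3) ℤ :=
  aeval ![X 1 + X 2, X 0 + 6 * X 1 + 6 * X 2]

theorem toST_X_zero : toST (X 0) = X 1 - 6 * X 0 := aeval_X _ _
theorem toST_X_one : toST (X 1) = -2 * X 0 := aeval_X _ _
theorem toST_X_two : toST (X 2) = 3 * X 0 := aeval_X _ _
theorem ofST_X_zero : ofST (X 0) = X 1 + X 2 := aeval_X _ _
theorem ofST_X_one : ofST (X 1) = X 0 + 6 * X 1 + 6 * X 2 := aeval_X _ _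

theorem relX_le_comap_toST : relX ≤ relST.comap toST := by
  refine Ideal.span_le.mpr ?_
  rintro _ (rfl | rfl) <;> rw [SetLike.mem_coe, Ideal.mem_comap, Ideal.mem_span_singleton']
  · exact ⟨1, by simp only [map_add, map_mul, map_ofNat, toST_X_zero, toST_X_two]; ring⟩
  · exact ⟨0, by simp only [map_add, map_mul, map_ofNat, toST_X_one, toST_X_two]; ring⟩

theorem relST_le_comap_ofST : relST ≤ relX.comap ofST := by
  refine Ideal.span_le.mpr ?_
  rintro _ rfl
  exact Ideal.mem_span_pair.mpr ⟨1, 4, by simp only [map_mul, map_ofNat, ofST_X_one]; ring⟩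

theorem ofST_toST_X_sub_mem (i : Fin 3) : ofST (toST (X i)) - X i ∈ relX := by
  rw [Ideal.mem_span_pair]
  fin_cases i
  · refine ⟨0, 0, ?_⟩
    simp only [Fin.zero_eta, toST_X_zero, map_sub, map_mul, map_ofNat, ofST_X_zero, ofST_X_one]
    ring
  · refine ⟨0, -1, ?_⟩
    simp only [Fin.mk_one, toST_X_one, map_mul, map_neg, map_ofNat, ofST_X_zero]
    ring
  · refine ⟨0, 1, ?_⟩
    simp only [Fin.reduceFinMk, toST_X_two, map_mul, map_ofNat, ofST_X_zero]
    ring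

theorem toST_ofST_X_sub_mem (i : Fin 2) : toST (ofST (X i)) - X i ∈ relST := by
  rw [Ideal.mem_span_singleton']
  fin_cases i
  · exact ⟨0, by simp only [Fin.zero_eta, ofST_X_zero, map_add, toST_X_one, toST_X_two]; ring⟩
  · refine ⟨0, ?_⟩
    simp only [Fin.mk_one, ofST_X_one, map_add, map_mul, map_ofNat, toST_X_zero, toST_X_one,
      toST_X_two]
    ring

end

/-- ℤ[x₁,x₂,x₃]/(2x₁+4x₃, 3x₂+2x₃) ≅ ℤ[s,t]/(2t). -/
theorem stmt_2 :
    Nonempty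
      ((MvPolynomial (Fin 3) ℤ ⧸
          Ideal.span ({2 * X 0 + 4 * X 2, 3 * X 1 + 2 * X 2} :
            Set (MvPolynomial (Fin 3) ℤ)))
        ≃+*
       (MvPolynomial (Fin 2) ℤ ⧸
          Ideal.span ({2 * X 1} : Set (MvPolynomial (Fin 2) ℤ)))) :=
  ⟨Ideal.quotientEquivOfInverseModulo_s2 toST.toRingHom ofST.toRingHom
    relX_le_comap_toST relST_le_comap_ofST
    (sub_mem_of_forall_X_sub_mem (ofST.comp toST) ofST_toST_X_sub_mem)
    (sub_mem_of_forall_X_sub_mem (toST.comp ofST) toST_ofST_X_sub_mem)⟩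
end
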